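/- Assume (b·a)·b = b·(a·b). Let y = Σ_{(μ,ν)∈S} c_{μ,ν}·b_{μ,ν} (with c_{μ,ν} ∈ F) be nonzero and satisfy b·y = ρ·y and y·b = ξ·y for scalars ρ, ξ ∈ F. Then: (1) ρ + ξ = 1; (2) Σ_{(μ,ν)∈S} c_{μ,ν}·(b_{μ,ν}·b_{μ,ν}) = 0; and (3) for every (μ,ν) ∈ S with c_{μ,ν}·b_{μ,ν} ≠ 0, one has (μ + ν)·ρ = (1 − α)ν + αμ and (μ + ν)·ξ = (1 − α)μ + αν. -/

import Mathlib

/-!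
Every identity between products is compared componentwise in the decomposition
`A = (F a ⊕ A₀(a)) ⊕ ⨁_{(μ,ν) ∈ S} A_{μ,ν}(a)`: by the fusion rules, the `A_{μ,ν}`-component of
`(X + Σ x) (Y + Σ y)` is `X y_{μ,ν} + x_{μ,ν} Y`, and its `F a + A₀`-component is
`X Y + Σ x_{μ,ν} y_{μ,ν}`. With `B = α a + b₀`, the identities `b y = ρ y`, `y b = ξ y`, `b² = b`
and `(b a) b = b (a b)` then say that each `x = b_{μ,ν}` with `c_{μ,ν} x ≠ 0` satisfies
`B x = ρ x`, `x B = ξ x`, `B x + x B = x` and `α μ x + ν (x B) = μ (B x) + α ν x`, from which the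
scalar relations follow; identity (2) is the `F a + A₀`-component of `b y = ρ y`.
-/

/-- The `(μ, ν)` paired eigenspace of an element `e` of a (not necessarily
associative, commutative or unital) `F`-algebra `A`. -/
def eigSp (F : Type*) {A : Type*} [Field F] [NonUnitalNonAssocRing A] [Module F A]
    [SMulCommClass F A A] [IsScalarTower F A A] (e : A) (μ ν : F) : Submodule F A where
  carrier := {x | e * x = μ • x ∧ x * e = ν • x}
  add_mem' := by
    rintro x y ⟨hx1, hx2⟩ ⟨hy1, hy2⟩
    exact ⟨by rw [mul_add, hx1, hy1, smul_add], by rw [add_mul, hx2, hy2, smul_add]⟩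
  zero_mem' := ⟨by rw [mul_zero, smul_zero], by rw [zero_mul, smul_zero]⟩
  smul_mem' := by
    rintro c x ⟨hx1, hx2⟩
    exact ⟨by rw [mul_smul_comm, hx1, smul_comm], by rw [smul_mul_assoc, hx2, smul_comm]⟩

/-- The family of submodules exhibiting `A` as a direct sum: a distinguished
submodule `E₁` (playing the role of the `(1,1)`-eigenspace), the zero
eigenspace of `a`, and the `(μ, ν)` eigenspaces of `a` for `(μ, ν) ∈ S`. -/
def axisFam (F : Type*) {A : Type*} [Field F] [NonUnitalNonAssocRing A] [Module F A]
    [SMulCommClass F A A] [IsScalarTower F A A] (a : A) (E₁ : Submodule F A)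
    (S : Finset (F × F)) : Option (Option {p : F × F // p ∈ S}) → Submodule F A
  | none => E₁
  | some none => eigSp F a 0 0
  | some (some p) => eigSp F a p.1.1 p.1.2

open Submodule

section Eigenvalues

variable {F A : Type*} [Field F] [AddCommGroup A] [Module F A] [Mul A]

theorem eigenvalue_relations {B x : A} {c ρ ξ α μ ν : F} (hx : c • x ≠ 0)
    (hBx : c • (B * x) = ρ • c • x) (hxB : c • (x * B) = ξ • c • x)
    (hidem : B * x + x * B = x)
    (hcomm : α • μ • x + ν • (x * B) = μ • (B * x) + α • ν • x) :
    ρ + ξ = 1 ∧ (μ + ν) * ρ = (1 - α) * ν + α * μ ∧ (μ + ν) * ξ = (1 - α) * μ + α * ν := by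
  have hsum : (ρ + ξ) • c • x = (1 : F) • c • x := by
    rw [add_smul, ← hBx, ← hxB, ← smul_add, hidem, one_smul]
  have hρξ := smul_left_injective F hx hsum
  have hμν : (α * μ + ν * ξ) • c • x = (α * ν + μ * ρ) • c • x :=
    calc (α * μ + ν * ξ) • c • x = c • ((α * μ) • x) + ν • c • (x * B) := by rw [hxB]; module
      _ = c • ((α * ν) • x) + μ • c • (B * x) := by
        rw [smul_comm ν c, smul_comm μ c, ← smul_add, mul_smul, hcomm, smul_add, mul_smul,
          add_comm]
      _ = (α * ν + μ * ρ) • c • x := by rw [hBx]; module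
  have hscal := smul_left_injective F hx hμν
  exact ⟨hρξ, by linear_combination ν * hρξ - hscal, by linear_combination μ * hρξ + hscal⟩

end Eigenvalues

section Orthogonal

variable {A ι : Type*} [NonUnitalNonAssocSemiring A]

theorem add_sum_mul_add_sum {s : Finset ι} {x y : ι → A}
    (horth : ∀ i ∈ s, ∀ j ∈ s, i ≠ j → x i * y j = 0) (X Y : A) :
    (X + ∑ i ∈ s, x i) * (Y + ∑ i ∈ s, y i) =
      (X * Y + ∑ i ∈ s, x i * y i) + ∑ i ∈ s, (X * y i + x i * Y) := by
  have hdiag : (∑ i ∈ s, x i) * (∑ j ∈ s, y j) = ∑ i ∈ s, x i * y i := by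
    rw [Finset.sum_mul_sum]
    refine Finset.sum_congr rfl fun i hi => Finset.sum_eq_single_of_mem i hi fun j hj hji => ?_
    exact horth i hi j hj hji.symm
  rw [add_mul, mul_add, mul_add, hdiag, Finset.mul_sum, Finset.sum_mul, Finset.sum_add_distrib]
  abel

end Orthogonal

section Axis

variable {F A : Type*} [Field F] [NonUnitalNonAssocRing A] [Module F A]
    [SMulCommClass F A A] [IsScalarTower F A A]

theorem axisFam_components_eq {a : A} {E₁ : Submodule F A} {S : Finset (F × F)}
    (hindep : iSupIndep (axisFam F a E₁ S)) {u u' : A} (hu : u ∈ E₁ ⊔ eigSp F a 0 0)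
    (hu' : u' ∈ E₁ ⊔ eigSp F a 0 0) {w w' : F × F → A}
    (hw : ∀ p ∈ S, w p ∈ eigSp F a p.1 p.2) (hw' : ∀ p ∈ S, w' p ∈ eigSp F a p.1 p.2)
    (h : u + ∑ p ∈ S, w p = u' + ∑ p ∈ S, w' p) : u = u' ∧ ∀ p ∈ S, w p = w' p := by
  obtain ⟨u₁, hu₁, u₀, hu₀, rfl⟩ := mem_sup.mp hu
  obtain ⟨u₁', hu₁', u₀', hu₀', rfl⟩ := mem_sup.mp hu'
  let v : A → A → (F × F → A) → Option (Option {p // p ∈ S}) → A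
    | e, _, _, none => e
    | _, z, _, some none => z
    | _, _, c, some (some p) => c p
  have hsum : ∀ e z c, ∑ i, v e z c i = e + z + ∑ p ∈ S, c p := fun e z c => by
    simp only [Fintype.sum_option, v, Finset.sum_coe_sort S c, add_assoc]
  have hcomp := (iSupIndep_iff_finsetSum_eq_imp_eq _).mp hindep Finset.univ
    (v u₁ u₀ w) (v u₁' u₀' w') (by
      rintro (_ | _ | ⟨p, hp⟩) -
      exacts [⟨hu₁, hu₁'⟩, ⟨hu₀, hu₀'⟩, ⟨hw p hp, hw' p hp⟩]) (by rw [hsum, hsum, h])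
  refine ⟨?_, fun p hp => hcomp (some (some ⟨p, hp⟩)) (Finset.mem_univ _)⟩
  exact congrArg₂ (· + ·) (hcomp none (Finset.mem_univ _))
    (hcomp (some none) (Finset.mem_univ _))

theorem mul_smul_add_add_sum_eq {e : A} (he : e * e = e) (α : F) {x₀ : A}
    (hx₀ : x₀ ∈ eigSp F e 0 0) {S : Finset (F × F)} {x : F × F → A}
    (hx : ∀ p ∈ S, x p ∈ eigSp F e p.1 p.2) :
    e * (α • e + x₀ + ∑ p ∈ S, x p) = α • e + ∑ p ∈ S, p.1 • x p := by
  rw [mul_add, mul_add, mul_smul_comm, he, hx₀.1, zero_smul, add_zero, Finset.mul_sum]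
  exact congrArg _ (Finset.sum_congr rfl fun p hp => (hx p hp).1)

theorem smul_add_add_sum_mul_eq {e : A} (he : e * e = e) (α : F) {x₀ : A}
    (hx₀ : x₀ ∈ eigSp F e 0 0) {S : Finset (F × F)} {x : F × F → A}
    (hx : ∀ p ∈ S, x p ∈ eigSp F e p.1 p.2) :
    (α • e + x₀ + ∑ p ∈ S, x p) * e = α • e + ∑ p ∈ S, p.2 • x p := by
  rw [add_mul, add_mul, smul_mul_assoc, he, hx₀.2, zero_smul, add_zero, Finset.sum_mul]
  exact congrArg _ (Finset.sum_congr rfl fun p hp => (hx p hp).2)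

end Axis

section Components

variable {F A : Type*} [Field F] [NonUnitalNonAssocRing A] [Module F A]
    [SMulCommClass F A A] [IsScalarTower F A A]
    {a : A} {E₁ : Submodule F A} {S : Finset (F × F)}
    (fus2 : ∀ p ∈ S, ∀ x ∈ eigSp F a p.1 p.2, ∀ y ∈ eigSp F a p.1 p.2,
      x * y ∈ E₁ ⊔ eigSp F a 0 0)
    (fus3 : ∀ x ∈ E₁ ⊔ eigSp F a 0 0, ∀ y ∈ E₁ ⊔ eigSp F a 0 0, x * y ∈ E₁ ⊔ eigSp F a 0 0)
    (fus4 : ∀ p ∈ S, ∀ x ∈ E₁ ⊔ eigSp F a 0 0, ∀ y ∈ eigSp F a p.1 p.2,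
      x * y ∈ eigSp F a p.1 p.2 ∧ y * x ∈ eigSp F a p.1 p.2)
include fus2 fus3 fus4

theorem mul_add_sum_mul_mem {X Y : A} {x y : F × F → A}
    (hX : X ∈ E₁ ⊔ eigSp F a 0 0) (hY : Y ∈ E₁ ⊔ eigSp F a 0 0)
    (hx : ∀ p ∈ S, x p ∈ eigSp F a p.1 p.2) (hy : ∀ p ∈ S, y p ∈ eigSp F a p.1 p.2) :
    X * Y + ∑ p ∈ S, x p * y p ∈ E₁ ⊔ eigSp F a 0 0 ∧
      ∀ p ∈ S, X * y p + x p * Y ∈ eigSp F a p.1 p.2 :=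
  ⟨add_mem (fus3 _ hX _ hY) (sum_mem fun p hp => fus2 p hp _ (hx p hp) _ (hy p hp)),
    fun p hp => add_mem (fus4 p hp _ hX _ (hy p hp)).1 (fus4 p hp _ hY _ (hx p hp)).2⟩

variable (hindep : iSupIndep (axisFam F a E₁ S))
    (fus1 : ∀ p ∈ S, ∀ q ∈ S, p ≠ q →
      ∀ x ∈ eigSp F a p.1 p.2, ∀ y ∈ eigSp F a q.1 q.2, x * y = 0)
include hindep fus1

theorem axisFam_mul_components_eq {X Y u : A} {x y w : F × F → A}
    (hX : X ∈ E₁ ⊔ eigSp F a 0 0) (hY : Y ∈ E₁ ⊔ eigSp F a 0 0)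
    (hx : ∀ p ∈ S, x p ∈ eigSp F a p.1 p.2) (hy : ∀ p ∈ S, y p ∈ eigSp F a p.1 p.2)
    (hu : u ∈ E₁ ⊔ eigSp F a 0 0) (hw : ∀ p ∈ S, w p ∈ eigSp F a p.1 p.2)
    (h : (X + ∑ p ∈ S, x p) * (Y + ∑ p ∈ S, y p) = u + ∑ p ∈ S, w p) :
    X * Y + ∑ p ∈ S, x p * y p = u ∧ ∀ p ∈ S, X * y p + x p * Y = w p := by
  rw [add_sum_mul_add_sum fun p hp q hq hpq => fus1 p hp q hq hpq _ (hx p hp) _ (hy q hq)] at h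
  have hmem := mul_add_sum_mul_mem fus2 fus3 fus4 hX hY hx hy
  exact axisFam_components_eq hindep hmem.1 hu hmem.2 hw h

variable {B : A} {bc : F × F → A}

theorem components_of_mul_eq_smul (hB : B ∈ E₁ ⊔ eigSp F a 0 0)
    (hbc : ∀ p ∈ S, bc p ∈ eigSp F a p.1 p.2) {c : F × F → F} {ρ : F}
    (h : (B + ∑ p ∈ S, bc p) * ∑ p ∈ S, c p • bc p = ρ • ∑ p ∈ S, c p • bc p) :
    ∑ p ∈ S, c p • (bc p * bc p) = 0 ∧ ∀ p ∈ S, c p • (B * bc p) = ρ • c p • bc p := by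
  have hcbc : ∀ p ∈ S, c p • bc p ∈ eigSp F a p.1 p.2 := fun p hp => smul_mem _ _ (hbc p hp)
  have hcomp := axisFam_mul_components_eq fus2 fus3 fus4 hindep fus1 hB (zero_mem _) hbc hcbc
    (w := fun p => ρ • c p • bc p) (zero_mem _) (fun p hp => smul_mem _ ρ (hcbc p hp))
    (by rw [zero_add, zero_add, h, Finset.smul_sum])
  simpa only [mul_zero, add_zero, zero_add, mul_smul_comm] using hcomp

theorem components_of_smul_mul_eq (hB : B ∈ E₁ ⊔ eigSp F a 0 0)
    (hbc : ∀ p ∈ S, bc p ∈ eigSp F a p.1 p.2) {c : F × F → F} {ξ : F}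
    (h : (∑ p ∈ S, c p • bc p) * (B + ∑ p ∈ S, bc p) = ξ • ∑ p ∈ S, c p • bc p) :
    ∀ p ∈ S, c p • (bc p * B) = ξ • c p • bc p := by
  have hcbc : ∀ p ∈ S, c p • bc p ∈ eigSp F a p.1 p.2 := fun p hp => smul_mem _ _ (hbc p hp)
  have hcomp := axisFam_mul_components_eq fus2 fus3 fus4 hindep fus1 (zero_mem _) hB hcbc hbc
    (w := fun p => ξ • c p • bc p) (zero_mem _) (fun p hp => smul_mem _ ξ (hcbc p hp))
    (by rw [zero_add, zero_add, h, Finset.smul_sum])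
  simpa only [zero_mul, zero_add, smul_mul_assoc] using hcomp.2

theorem components_of_mul_self_eq_self (hB : B ∈ E₁ ⊔ eigSp F a 0 0)
    (hbc : ∀ p ∈ S, bc p ∈ eigSp F a p.1 p.2)
    (h : (B + ∑ p ∈ S, bc p) * (B + ∑ p ∈ S, bc p) = B + ∑ p ∈ S, bc p) :
    ∀ p ∈ S, B * bc p + bc p * B = bc p :=
  (axisFam_mul_components_eq fus2 fus3 fus4 hindep fus1 hB hB hbc hbc hB hbc h).2

theorem components_of_mul_mul_comm (ha : a * a = a) (haE : a ∈ E₁) {α : F} {b₀ : A}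
    (hb₀ : b₀ ∈ eigSp F a 0 0) (hbc : ∀ p ∈ S, bc p ∈ eigSp F a p.1 p.2)
    (h : ((α • a + b₀ + ∑ p ∈ S, bc p) * a) * (α • a + b₀ + ∑ p ∈ S, bc p) =
      (α • a + b₀ + ∑ p ∈ S, bc p) * (a * (α • a + b₀ + ∑ p ∈ S, bc p))) :
    ∀ p ∈ S, α • p.1 • bc p + p.2 • (bc p * (α • a + b₀)) =
      p.1 • ((α • a + b₀) * bc p) + α • p.2 • bc p := by
  rw [smul_add_add_sum_mul_eq ha α hb₀ hbc, mul_smul_add_add_sum_eq ha α hb₀ hbc] at h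
  have hαa : α • a ∈ E₁ ⊔ eigSp F a 0 0 := mem_sup_left (smul_mem _ α haE)
  have hB : α • a + b₀ ∈ E₁ ⊔ eigSp F a 0 0 := add_mem hαa (mem_sup_right hb₀)
  have hsmul : ∀ (f : F × F → F), ∀ p ∈ S, f p • bc p ∈ eigSp F a p.1 p.2 :=
    fun f p hp => smul_mem _ _ (hbc p hp)
  rw [add_sum_mul_add_sum (fun p hp q hq hpq => fus1 p hp q hq hpq _ (hbc p hp) _
    (hsmul Prod.fst q hq)) (α • a + b₀) (α • a)] at h
  have hrhs := mul_add_sum_mul_mem fus2 fus3 fus4 hB hαa hbc (hsmul Prod.fst)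
  intro p hp
  have hcomp := (axisFam_mul_components_eq fus2 fus3 fus4 hindep fus1 hαa hB (hsmul Prod.snd) hbc
    hrhs.1 hrhs.2 h).2 p hp
  rwa [smul_mul_assoc, (hbc p hp).1, smul_mul_assoc, mul_smul_comm, mul_smul_comm,
    (hbc p hp).2] at hcomp

end Components

theorem stmt_17_general {F A : Type*} [Field F] [NonUnitalNonAssocRing A] [Module F A]
    [SMulCommClass F A A] [IsScalarTower F A A]
    -- `a` is an idempotent and a weakly primitive `S`-axis:
    (a : A) (ha : a * a = a)
    (S : Finset (F × F))
    (hindep : iSupIndep (axisFam F a (Submodule.span F {a}) S))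
    -- the fusion rules for `a`:
    (fus1 : ∀ p ∈ S, ∀ q ∈ S, p ≠ q →
      ∀ x ∈ eigSp F a p.1 p.2, ∀ y ∈ eigSp F a q.1 q.2, x * y = 0)
    (fus2 : ∀ p ∈ S, ∀ x ∈ eigSp F a p.1 p.2, ∀ y ∈ eigSp F a p.1 p.2,
      x * y ∈ Submodule.span F {a} ⊔ eigSp F a 0 0)
    (fus3 : ∀ x ∈ Submodule.span F {a} ⊔ eigSp F a 0 0,
      ∀ y ∈ Submodule.span F {a} ⊔ eigSp F a 0 0,
      x * y ∈ Submodule.span F {a} ⊔ eigSp F a 0 0)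
    (fus4 : ∀ p ∈ S, ∀ x ∈ Submodule.span F {a} ⊔ eigSp F a 0 0, ∀ y ∈ eigSp F a p.1 p.2,
      x * y ∈ eigSp F a p.1 p.2 ∧ y * x ∈ eigSp F a p.1 p.2)
    -- `b` is an idempotent, decomposed along the eigenspaces of `a`:
    (b : A) (hb : b * b = b)
    (α : F) (b₀ : A) (hb₀ : b₀ ∈ eigSp F a 0 0)
    (bc : F × F → A) (hbc : ∀ p ∈ S, bc p ∈ eigSp F a p.1 p.2)
    (hbdecomp : b = α • a + b₀ + ∑ p ∈ S, bc p)
    (hcomm : (b * a) * b = b * (a * b))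
    (cc : F × F → F) (y : A)
    (hy : y = ∑ p ∈ S, cc p • bc p) (hyne : y ≠ 0)
    (ρ ξ : F) (hby : b * y = ρ • y) (hyb : y * b = ξ • y) :
    ρ + ξ = 1 ∧
    (∑ p ∈ S, cc p • (bc p * bc p)) = 0 ∧
    ∀ p ∈ S, cc p • bc p ≠ 0 →
      (p.1 + p.2) * ρ = (1 - α) * p.2 + α * p.1 ∧
      (p.1 + p.2) * ξ = (1 - α) * p.1 + α * p.2 := by
  subst hbdecomp hy
  have haE : a ∈ span F {a} := mem_span_singleton_self a
  have hB : α • a + b₀ ∈ span F {a} ⊔ eigSp F a 0 0 :=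
    add_mem (mem_sup_left (smul_mem _ α haE)) (mem_sup_right hb₀)
  obtain ⟨hsq, hBy⟩ := components_of_mul_eq_smul fus2 fus3 fus4 hindep fus1 hB hbc hby
  have hyB := components_of_smul_mul_eq fus2 fus3 fus4 hindep fus1 hB hbc hyb
  have hidem := components_of_mul_self_eq_self fus2 fus3 fus4 hindep fus1 hB hbc hb
  have hcomm' := components_of_mul_mul_comm fus2 fus3 fus4 hindep fus1 ha haE hb₀ hbc hcomm
  have hrel : ∀ p ∈ S, cc p • bc p ≠ 0 → ρ + ξ = 1 ∧
      (p.1 + p.2) * ρ = (1 - α) * p.2 + α * p.1 ∧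
      (p.1 + p.2) * ξ = (1 - α) * p.1 + α * p.2 := fun p hp hv =>
    eigenvalue_relations hv (hBy p hp) (hyB p hp) (hidem p hp) (hcomm' p hp)
  obtain ⟨p₀, hp₀, hv₀⟩ : ∃ p ∈ S, cc p • bc p ≠ 0 := by
    by_contra! h
    exact hyne (Finset.sum_eq_zero h)
  exact ⟨(hrel p₀ hp₀ hv₀).1, hsq, fun p hp hv => (hrel p hp hv).2⟩

/-- Assume `(b·a)·b = b·(a·b)`.  Let `y = Σ_{(μ,ν)∈S} c_{μ,ν}·b_{μ,ν}` be
nonzero with `b·y = ρ·y` and `y·b = ξ·y`.  Then: (1) `ρ + ξ = 1`;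
(2) `Σ_{(μ,ν)∈S} c_{μ,ν}·b_{μ,ν}² = 0`; and (3) for every `(μ,ν) ∈ S` with
`c_{μ,ν}·b_{μ,ν} ≠ 0`, one has `(μ + ν)·ρ = (1 − α)ν + αμ` and
`(μ + ν)·ξ = (1 − α)μ + αν`. -/
theorem stmt_17 {F A : Type*} [Field F] [NonUnitalNonAssocRing A] [Module F A]
    [SMulCommClass F A A] [IsScalarTower F A A]
    (hchar : (2 : F) ≠ 0)
    -- `a` is an idempotent and a weakly primitive `S`-axis:
    (a : A) (ha : a * a = a)
    (S : Finset (F × F)) (hS0 : ((0 : F), (0 : F)) ∉ S) (hS1 : ((1 : F), (1 : F)) ∉ S)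
    (hindep : iSupIndep (axisFam F a (Submodule.span F {a}) S))
    (hsup : (⨆ i, axisFam F a (Submodule.span F {a}) S i) = ⊤)
    (hwp : eigSp F a 1 1 = Submodule.span F {a})
    -- the fusion rules for `a`:
    (fus1 : ∀ p ∈ S, ∀ q ∈ S, p ≠ q →
      ∀ x ∈ eigSp F a p.1 p.2, ∀ y ∈ eigSp F a q.1 q.2, x * y = 0)
    (fus2 : ∀ p ∈ S, ∀ x ∈ eigSp F a p.1 p.2, ∀ y ∈ eigSp F a p.1 p.2,
      x * y ∈ Submodule.span F {a} ⊔ eigSp F a 0 0)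
    (fus3 : ∀ x ∈ Submodule.span F {a} ⊔ eigSp F a 0 0,
      ∀ y ∈ Submodule.span F {a} ⊔ eigSp F a 0 0,
      x * y ∈ Submodule.span F {a} ⊔ eigSp F a 0 0)
    (fus4 : ∀ p ∈ S, ∀ x ∈ Submodule.span F {a} ⊔ eigSp F a 0 0, ∀ y ∈ eigSp F a p.1 p.2,
      x * y ∈ eigSp F a p.1 p.2 ∧ y * x ∈ eigSp F a p.1 p.2)
    -- `b` is an idempotent, decomposed along the eigenspaces of `a`:
    (b : A) (hb : b * b = b)
    (α : F) (b₀ : A) (hb₀ : b₀ ∈ eigSp F a 0 0)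
    (bc : F × F → A) (hbc : ∀ p ∈ S, bc p ∈ eigSp F a p.1 p.2)
    (hbdecomp : b = α • a + b₀ + ∑ p ∈ S, bc p)
    (hcomm : (b * a) * b = b * (a * b))
    (cc : F × F → F) (y : A)
    (hy : y = ∑ p ∈ S, cc p • bc p) (hyne : y ≠ 0)
    (ρ ξ : F) (hby : b * y = ρ • y) (hyb : y * b = ξ • y) :
    ρ + ξ = 1 ∧
    (∑ p ∈ S, cc p • (bc p * bc p)) = 0 ∧
    ∀ p ∈ S, cc p • bc p ≠ 0 →
      (p.1 + p.2) * ρ = (1 - α) * p.2 + α * p.1 ∧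
      (p.1 + p.2) * ξ = (1 - α) * p.1 + α * p.2 :=
  stmt_17_general a ha S hindep fus1 fus2 fus3 fus4 b hb α b₀ hb₀ bc hbc hbdecomp hcomm cc y hy hyne
    ρ ξ hby hyb
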